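/- For every p ∈ ℕ one has p/8 ≤ L^max_{2^p} ≤ p, where L^max_n = max_{k ≤ n} L_k and L_k = ∫_0^1 |D_k(t)| dt is the k-th Lebesgue constant of the Walsh system. -/

import Mathlib

open MeasureTheory
open scoped ENNReal

noncomputable section

/-- The Rademacher function `r_{i+1}` of the paper: `r_1(t) = 1` on `[0,1/2) + ℤ`,
`-1` on `[1/2,1) + ℤ`, and `r_{i+1}(t) = r_1(2^i t)`. -/
def rademacher (i : ℕ) (t : ℝ) : ℝ :=
  if Int.fract (2 ^ i * t) < 1 / 2 then 1 else -1

/-- The `n`-th Walsh function `w_n = ∏_i r_{i+1}^{n_i}` where `n = ∑_i n_i 2^i`. -/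
def walsh (n : ℕ) (t : ℝ) : ℝ :=
  ∏ i ∈ Finset.range n, if n.testBit i then rademacher i t else 1

/-- Lebesgue measure on `[0,1]`. -/
def unitI : Measure ℝ := volume.restrict (Set.Icc 0 1)

/-- `f ∈ L_2^X`: `f : [0,1] → X` is (Bochner) measurable with `∫_0^1 ‖f(t)‖² dt < ∞`. -/
def MemL2 {X : Type*} [NormedAddCommGroup X] (f : ℝ → X) : Prop := MemLp f 2 unitI

/-- `‖f‖_2 = (∫_0^1 ‖f(t)‖² dt)^{1/2}`. -/
def l2norm {X : Type*} [NormedAddCommGroup X] (f : ℝ → X) : ℝ :=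
  Real.sqrt (∫ t, ‖f t‖ ^ 2 ∂unitI)

/-- The Walsh–Fourier coefficient `⟨f, w_i⟩ = ∫_0^1 f(t) w_i(t) dt`. -/
def walshCoeff {X : Type*} [NormedAddCommGroup X] [NormedSpace ℝ X] (f : ℝ → X) (i : ℕ) : X :=
  ∫ t, walsh i t • f t ∂unitI

/-- The `n`-th Walsh partial sum `S_n(f) = ∑_{i<n} ⟨f,w_i⟩ w_i`. -/
def walshSum {X : Type*} [NormedAddCommGroup X] [NormedSpace ℝ X] (n : ℕ) (f : ℝ → X) :
    ℝ → X :=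
  fun t => ∑ i ∈ Finset.range n, walsh i t • walshCoeff f i

/-- The `n`-th Walsh–Dirichlet kernel `D_n = ∑_{i<n} w_i`. -/
def dirichlet (n : ℕ) (t : ℝ) : ℝ := ∑ i ∈ Finset.range n, walsh i t

/-- The `n`-th Lebesgue constant `L_n = ∫_0^1 |D_n(t)| dt` of the Walsh system. -/
def lebesgueConst (n : ℕ) : ℝ := ∫ t, |dirichlet n t| ∂unitI

/-- `L^max_n = max_{1 ≤ k ≤ n} L_k`. -/
def lebesgueMax (n : ℕ) : ℝ :=
  sSup {d : ℝ | ∃ k, 1 ≤ k ∧ k ≤ n ∧ d = lebesgueConst k}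

/-! The kernels `D_{2^k} = ∏_{i<k} (1 + r_{i+1})` are `2^k` on `[0, 2^{-k})` and `0` on
`[2^{-k}, 1)`, so `L_{2^k} = 1`, and for `m ≤ 2^k` one has `D_{2^k+m} = D_{2^k} + r_{k+1} D_m`.
Since `|D_m| ≤ m`, this gives `L_m + 1 - 2m/2^k ≤ L_{2^k+m} ≤ L_m + 1`. The upper bound
yields `L_n ≤ p` for `n ≤ 2^p` by induction on `p`. Along Fine's indices
`N_k = 1 + 4 + ⋯ + 4^{k-1}` one has `3 N_k < 4^k`, so each step `N_{k+1} = 4^k + N_k` gains at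
least `1/3`, and `L_{N_k} ≥ k/3` with `N_k < 2^p` for `k = ⌊(p+1)/2⌋`. -/

lemma rademacher_eq_one_or_neg_one (i : ℕ) (t : ℝ) :
    rademacher i t = 1 ∨ rademacher i t = -1 := by
  unfold rademacher
  split_ifs <;> simp

lemma abs_rademacher (i : ℕ) (t : ℝ) : |rademacher i t| = 1 := by
  rcases rademacher_eq_one_or_neg_one i t with h | h <;> simp [h]

lemma measurable_rademacher (i : ℕ) : Measurable (rademacher i) :=
  Measurable.ite (measurableSet_lt (measurable_fract.comp (measurable_const.mul measurable_id))
    measurable_const) measurable_const measurable_const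

lemma rademacher_eq_one_of_lt {i k : ℕ} (hi : i < k) {t : ℝ} (ht₀ : 0 ≤ t)
    (ht : t < ((2 : ℝ) ^ k)⁻¹) : rademacher i t = 1 := by
  have hik : (2 : ℝ) ^ i * 2 ≤ 2 ^ k := by
    rw [← pow_succ]; exact pow_le_pow_right₀ (by norm_num) hi
  have hk : (2 : ℝ) ^ k * t < 1 := by
    calc (2 : ℝ) ^ k * t < 2 ^ k * (2 ^ k)⁻¹ := by gcongr
      _ = 1 := mul_inv_cancel₀ (by positivity)
  have hlt : 2 ^ i * t < 1 / 2 := by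
    nlinarith [mul_le_mul_of_nonneg_right hik ht₀]
  rw [rademacher, if_pos]
  rwa [Int.fract_eq_self.2 ⟨by positivity, by linarith⟩]

lemma exists_rademacher_eq_neg_one {k : ℕ} {t : ℝ} (h₁ : ((2 : ℝ) ^ k)⁻¹ ≤ t) (h₂ : t < 1) :
    ∃ i < k, rademacher i t = -1 := by
  induction k with
  | zero => norm_num at h₁; linarith
  | succ k ih =>
    by_cases hk : ((2 : ℝ) ^ k)⁻¹ ≤ t
    · obtain ⟨i, hi, hr⟩ := ih hk
      exact ⟨i, by omega, hr⟩
    · -- then `2^k t ∈ [1/2, 1)`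
      replace hk := not_le.1 hk
      have hpos : (0 : ℝ) < 2 ^ k := by positivity
      rw [pow_succ, mul_inv, inv_mul_le_iff₀ hpos] at h₁
      rw [inv_eq_one_div, lt_div_iff₀ hpos] at hk
      refine ⟨k, k.lt_succ_self, ?_⟩
      rw [rademacher, if_neg]
      rw [Int.fract_eq_self.2 ⟨by positivity, by linarith⟩]
      linarith

lemma abs_walsh (n : ℕ) (t : ℝ) : |walsh n t| = 1 := by
  rw [walsh, Finset.abs_prod]
  refine Finset.prod_eq_one fun i _ => ?_
  split_ifs <;> simp [abs_rademacher]

lemma measurable_walsh (n : ℕ) : Measurable (walsh n) :=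
  Finset.measurable_prod _ fun i _ => by
    by_cases h : n.testBit i <;> simp [h, measurable_rademacher]

lemma walsh_eq_prod_range {n N : ℕ} (hN : n < 2 ^ N) (t : ℝ) :
    walsh n t = ∏ i ∈ Finset.range N, if n.testBit i then rademacher i t else 1 := by
  have extend : ∀ M, n < 2 ^ M → M ≤ n + N →
      ∏ i ∈ Finset.range M, (if n.testBit i then rademacher i t else 1) =
        ∏ i ∈ Finset.range (n + N), if n.testBit i then rademacher i t else 1 := by
    intro M hM hMN
    refine Finset.prod_subset (Finset.range_subset_range.2 hMN) fun i _ hi => ?_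
    have : n < 2 ^ i :=
      hM.trans_le (Nat.pow_le_pow_right (by norm_num) (by simpa using hi))
    simp [Nat.testBit_lt_two_pow this]
  rw [walsh, extend n Nat.lt_two_pow_self (by omega), extend N hN (by omega)]

lemma walsh_two_pow_add {k m : ℕ} (hm : m < 2 ^ k) (t : ℝ) :
    walsh (2 ^ k + m) t = rademacher k t * walsh m t := by
  have h₁ : 2 ^ k + m < 2 ^ (k + 1) := by rw [pow_succ]; omega
  have h₂ : m < 2 ^ (k + 1) := hm.trans (Nat.pow_lt_pow_right (by norm_num) k.lt_succ_self)
  rw [walsh_eq_prod_range h₁, walsh_eq_prod_range h₂, Finset.prod_range_succ,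
    Finset.prod_range_succ, Nat.testBit_two_pow_add_eq, Nat.testBit_lt_two_pow hm]
  rw [Finset.prod_congr rfl fun i hi => by
    rw [Nat.testBit_two_pow_add_gt (Finset.mem_range.1 hi)]]
  simp only [Bool.not_false, if_true, Bool.false_eq_true, if_false]
  ring

lemma measurable_dirichlet (n : ℕ) : Measurable (dirichlet n) :=
  Finset.measurable_sum _ fun i _ => measurable_walsh i

lemma abs_dirichlet_le (n : ℕ) (t : ℝ) : |dirichlet n t| ≤ n :=
  (Finset.abs_sum_le_sum_abs _ _).trans (by simp [abs_walsh])

lemma dirichlet_two_pow_add {k m : ℕ} (hm : m ≤ 2 ^ k) (t : ℝ) :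
    dirichlet (2 ^ k + m) t = dirichlet (2 ^ k) t + rademacher k t * dirichlet m t := by
  rw [dirichlet, dirichlet, dirichlet, Finset.sum_range_add, Finset.mul_sum]
  congr 1
  exact Finset.sum_congr rfl fun i hi =>
    walsh_two_pow_add ((Finset.mem_range.1 hi).trans_le hm) t

lemma dirichlet_two_pow (k : ℕ) (t : ℝ) :
    dirichlet (2 ^ k) t = ∏ i ∈ Finset.range k, (1 + rademacher i t) := by
  induction k with
  | zero => simp [dirichlet, walsh]
  | succ k ih =>
    rw [pow_succ, mul_two, dirichlet_two_pow_add le_rfl, ih, Finset.prod_range_succ]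
    ring

lemma dirichlet_two_pow_eq_zero_or_eq (k : ℕ) (t : ℝ) :
    dirichlet (2 ^ k) t = 0 ∨ dirichlet (2 ^ k) t = 2 ^ k := by
  rw [dirichlet_two_pow]
  induction k with
  | zero => simp
  | succ k ih =>
    rw [Finset.prod_range_succ, pow_succ]
    rcases ih with h | h <;> rcases rademacher_eq_one_or_neg_one k t with hr | hr <;>
      norm_num [h, hr]

lemma dirichlet_two_pow_of_lt (k : ℕ) {t : ℝ} (ht₀ : 0 ≤ t) (ht : t < ((2 : ℝ) ^ k)⁻¹) :
    dirichlet (2 ^ k) t = 2 ^ k := by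
  rw [dirichlet_two_pow, Finset.prod_congr rfl fun i hi => by
    rw [rademacher_eq_one_of_lt (Finset.mem_range.1 hi) ht₀ ht]]
  norm_num

lemma dirichlet_two_pow_of_le (k : ℕ) {t : ℝ} (h₁ : ((2 : ℝ) ^ k)⁻¹ ≤ t) (h₂ : t < 1) :
    dirichlet (2 ^ k) t = 0 := by
  obtain ⟨i, hi, hr⟩ := exists_rademacher_eq_neg_one h₁ h₂
  rw [dirichlet_two_pow]
  exact Finset.prod_eq_zero (Finset.mem_range.2 hi) (by rw [hr]; norm_num)

instance : IsProbabilityMeasure unitI :=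
  ⟨by simp [unitI]⟩

lemma integrable_abs_dirichlet (n : ℕ) : Integrable (fun t => |dirichlet n t|) unitI :=
  Integrable.of_bound (measurable_dirichlet n).abs.aestronglyMeasurable n
    (ae_of_all _ fun t => by simpa using abs_dirichlet_le n t)

lemma lebesgueConst_le_self (n : ℕ) : lebesgueConst n ≤ n := by
  calc lebesgueConst n ≤ ∫ _, (n : ℝ) ∂unitI :=
        integral_mono (integrable_abs_dirichlet n) (integrable_const _) (abs_dirichlet_le n)
    _ = n := by simp

lemma lebesgueConst_zero : lebesgueConst 0 = 0 := by
  simp [lebesgueConst, dirichlet]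

lemma lebesgueConst_two_pow (k : ℕ) : lebesgueConst (2 ^ k) = 1 := by
  have hε : ((2 : ℝ) ^ k)⁻¹ ≤ 1 := inv_le_one_of_one_le₀ (one_le_pow₀ (by norm_num))
  have hD : Set.EqOn (fun t => |dirichlet (2 ^ k) t|)
      ((Set.Ico 0 ((2 : ℝ) ^ k)⁻¹).indicator fun _ => 2 ^ k) (Set.Ico 0 1) := by
    intro t ⟨ht₀, ht₁⟩
    by_cases ht : t < ((2 : ℝ) ^ k)⁻¹
    · simp [Set.indicator_of_mem (show t ∈ Set.Ico _ _ from ⟨ht₀, ht⟩),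
        dirichlet_two_pow_of_lt k ht₀ ht]
    · simp [Set.indicator_of_notMem (show t ∉ Set.Ico _ _ from fun h => ht h.2),
        dirichlet_two_pow_of_le k (not_lt.1 ht) ht₁]
  rw [lebesgueConst, unitI, integral_Icc_eq_integral_Ico,
    setIntegral_congr_fun measurableSet_Ico hD, setIntegral_indicator measurableSet_Ico,
    Set.Ico_inter_Ico, setIntegral_const, max_self, min_eq_right hε,
    Real.volume_real_Ico_of_le (by positivity), smul_eq_mul, sub_zero,
    inv_mul_cancel₀ (by positivity)]

lemma lebesgueConst_two_pow_add_le {k m : ℕ} (hm : m ≤ 2 ^ k) :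
    lebesgueConst (2 ^ k + m) ≤ 1 + lebesgueConst m := by
  have hpt : ∀ t, |dirichlet (2 ^ k + m) t| ≤ |dirichlet (2 ^ k) t| + |dirichlet m t| := by
    intro t
    rw [dirichlet_two_pow_add hm]
    simpa [abs_mul, abs_rademacher] using
      abs_add_le (dirichlet (2 ^ k) t) (rademacher k t * dirichlet m t)
  rw [← lebesgueConst_two_pow k, lebesgueConst, lebesgueConst, lebesgueConst,
    ← integral_add (integrable_abs_dirichlet _) (integrable_abs_dirichlet _)]
  exact integral_mono (integrable_abs_dirichlet _)
    ((integrable_abs_dirichlet _).add (integrable_abs_dirichlet _)) hpt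

/-- On the support of `D_{2^k}` the bump `D_{2^k} = 2^k` absorbs `|D_m| ≤ m` at a cost of
at most `2m`; off it `D_{2^k+m} = ± D_m`. -/
lemma le_lebesgueConst_two_pow_add {k m : ℕ} (hm : m ≤ 2 ^ k) :
    lebesgueConst m + 1 - 2 * m / 2 ^ k ≤ lebesgueConst (2 ^ k + m) := by
  set c : ℝ := 1 - 2 * m / 2 ^ k
  have hpt : ∀ t, c * |dirichlet (2 ^ k) t| + |dirichlet m t| ≤ |dirichlet (2 ^ k + m) t| := by
    intro t
    have hDm := abs_dirichlet_le m t
    rw [dirichlet_two_pow_add hm]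
    rcases dirichlet_two_pow_eq_zero_or_eq k t with h | h
    · simp [h, abs_mul, abs_rademacher]
    · have hcD : c * |(2 : ℝ) ^ k| = 2 ^ k - 2 * m := by
        rw [abs_of_pos (by positivity)]
        simp only [c]
        field_simp
      have := abs_sub_abs_le_abs_add ((2 : ℝ) ^ k) (rademacher k t * dirichlet m t)
      rw [abs_of_pos (by positivity : (0 : ℝ) < 2 ^ k), abs_mul, abs_rademacher, one_mul] at this
      rw [h, hcD]
      linarith
  have hint : ∫ t, (c * |dirichlet (2 ^ k) t| + |dirichlet m t|) ∂unitI
      ≤ lebesgueConst (2 ^ k + m) :=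
    integral_mono (((integrable_abs_dirichlet _).const_mul c).add
      (integrable_abs_dirichlet _)) (integrable_abs_dirichlet _) hpt
  rw [integral_add ((integrable_abs_dirichlet _).const_mul c) (integrable_abs_dirichlet _),
    integral_const_mul] at hint
  change c * lebesgueConst (2 ^ k) + lebesgueConst m ≤ _ at hint
  rw [lebesgueConst_two_pow] at hint
  linarith

lemma lebesgueConst_le_of_lt_two_pow {p n : ℕ} (hn : n < 2 ^ p) : lebesgueConst n ≤ p := by
  induction p generalizing n with
  | zero =>
    obtain rfl : n = 0 := by simpa using hn
    simp [lebesgueConst_zero]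
  | succ p ih =>
    rcases lt_or_ge n (2 ^ p) with h | h
    · exact (ih h).trans (by simp)
    · obtain ⟨m, rfl⟩ := Nat.exists_eq_add_of_le h
      have hm : m < 2 ^ p := by rw [pow_succ] at hn; omega
      have := ih hm
      push_cast
      linarith [lebesgueConst_two_pow_add_le hm.le]

lemma lebesgueConst_le_of_le_two_pow {p n : ℕ} (hp : 1 ≤ p) (hn : n ≤ 2 ^ p) :
    lebesgueConst n ≤ p := by
  rcases hn.lt_or_eq with h | rfl
  · exact lebesgueConst_le_of_lt_two_pow h
  · rw [lebesgueConst_two_pow]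
    exact_mod_cast hp

def fineIndex (k : ℕ) : ℕ := ∑ j ∈ Finset.range k, 4 ^ j

lemma three_mul_fineIndex_lt (k : ℕ) : 3 * fineIndex k < 4 ^ k := by
  induction k with
  | zero => simp [fineIndex]
  | succ k ih =>
    rw [fineIndex, Finset.sum_range_succ, ← fineIndex, pow_succ]
    omega

lemma one_le_fineIndex {k : ℕ} (hk : 1 ≤ k) : 1 ≤ fineIndex k := by
  obtain ⟨j, rfl⟩ := Nat.exists_eq_add_of_le' hk
  simp [fineIndex, Finset.sum_range_succ']

lemma le_lebesgueConst_fineIndex (k : ℕ) : (k : ℝ) / 3 ≤ lebesgueConst (fineIndex k) := by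
  induction k with
  | zero => simp [fineIndex, lebesgueConst_zero]
  | succ k ih =>
    have h3 : 3 * fineIndex k < 2 ^ (2 * k) := by
      rw [pow_mul]; exact three_mul_fineIndex_lt k
    have hstep := le_lebesgueConst_two_pow_add (k := 2 * k) (m := fineIndex k) (by omega)
    have hgain : 2 * (fineIndex k : ℝ) / 2 ^ (2 * k) ≤ 2 / 3 := by
      have : (3 : ℝ) * fineIndex k < 2 ^ (2 * k) := by exact_mod_cast h3
      rw [div_le_iff₀ (by positivity)]
      linarith
    rw [fineIndex, Finset.sum_range_succ, ← fineIndex, Nat.add_comm (fineIndex k),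
      show 4 ^ k = 2 ^ (2 * k) by rw [pow_mul]; norm_num]
    push_cast
    linarith

lemma le_lebesgueMax {k n : ℕ} (hk : 1 ≤ k) (hkn : k ≤ n) : lebesgueConst k ≤ lebesgueMax n :=
  le_csSup ⟨n, by
    rintro _ ⟨j, -, hj, rfl⟩
    exact (lebesgueConst_le_self j).trans (by exact_mod_cast hj)⟩ ⟨k, hk, hkn, rfl⟩

lemma lebesgueMax_le {n : ℕ} (hn : 1 ≤ n) {C : ℝ}
    (h : ∀ k, 1 ≤ k → k ≤ n → lebesgueConst k ≤ C) : lebesgueMax n ≤ C :=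
  csSup_le ⟨_, 1, le_rfl, hn, rfl⟩ fun _ ⟨k, hk, hkn, hd⟩ => hd ▸ h k hk hkn

/-- **Lemma (Fine).** For every `p ≥ 1`, `p/8 ≤ L^max_{2^p} ≤ p`. -/
theorem lebesgueMax_growth (p : ℕ) (hp : 1 ≤ p) :
    (p : ℝ) / 8 ≤ lebesgueMax (2 ^ p) ∧ lebesgueMax (2 ^ p) ≤ p := by
  refine ⟨?_, lebesgueMax_le Nat.one_le_two_pow fun n _ hn => lebesgueConst_le_of_le_two_pow hp hn⟩
  set k := (p + 1) / 2
  have hN : fineIndex k ≤ 2 ^ p := by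
    have h4 : 4 ^ k ≤ 2 * 2 ^ p := by
      rw [← pow_succ', show 4 = 2 ^ 2 by rfl, ← pow_mul]
      exact Nat.pow_le_pow_right (by norm_num) (by omega)
    have := three_mul_fineIndex_lt k
    omega
  calc (p : ℝ) / 8 ≤ k / 3 := by
        rw [div_le_div_iff₀ (by norm_num) (by norm_num)]
        have : (p : ℝ) ≤ 2 * k := by exact_mod_cast (by omega : p ≤ 2 * k)
        linarith
    _ ≤ lebesgueConst (fineIndex k) := le_lebesgueConst_fineIndex k
    _ ≤ lebesgueMax (2 ^ p) := le_lebesgueMax (one_le_fineIndex (by omega)) hN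

end
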